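/- Let {(W_i, 1)} be a fusion frame for H with frame operator S_W, and {h_i} a Bessel sequence of unit vectors with h_i ∈ (S_W⁻¹W_i)^⊥. Set V_i = S_W⁻¹W_i + Z_i where Z_i = span{h_i}. Then {(V_i, 1)} is a Bessel fusion sequence and a dual of {(W_i, 1)}: f = Σ π_{V_i} S_W⁻¹ π_{W_i} f for all f ∈ H. -/

import Mathlib

/-! Since `h i ⟂ S_W⁻¹ W i`, the projection onto `V i` is the sum of the projections onto
`S_W⁻¹ W i` and onto `ℂ ∙ h i`. The vector `S_W⁻¹ π_{W i} f` already lies in `V i`, so the dual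
identity is `S_W⁻¹` applied to `S_W f = ∑ π_{W i} f`. For the Bessel bound,
`‖π_{E W} f‖ ≤ ‖E⁻¹‖ ‖π_W (E† f)‖` for invertible `E`, and `∑ ‖π_{W i} g‖² = Re ⟪g, S_W g⟫`
is at most `‖S_W‖ ‖g‖²`; the lines `ℂ ∙ h i` contribute `∑ |⟪h i, f⟫|²`. -/

open scoped InnerProductSpace

/-- Orthogonal projection onto a complete subspace, as an operator `H →L H`. -/
noncomputable def fusionProj {H : Type*} [NormedAddCommGroup H] [InnerProductSpace ℂ H]
    (K : Submodule ℂ H) [CompleteSpace K] : H →L[ℂ] H :=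
  K.subtypeL.comp (K.orthogonalProjectionOnto)

open Submodule ContinuousLinearMap

theorem fusionProj_eq_starProjection {H : Type*} [NormedAddCommGroup H] [InnerProductSpace ℂ H]
    (K : Submodule ℂ H) [CompleteSpace K] : fusionProj K = K.starProjection :=
  rfl

instance Submodule.completeSpace_map_continuousLinearEquiv {𝕜 E F : Type*} [NormedField 𝕜]
    [NormedAddCommGroup E] [NormedSpace 𝕜 E] [NormedAddCommGroup F] [NormedSpace 𝕜 F]
    [CompleteSpace F] (e : E ≃L[𝕜] F) (W : Submodule 𝕜 E) [CompleteSpace W] :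
    CompleteSpace (W.map ((e : E →L[𝕜] F) : E →ₗ[𝕜] F)) := by
  have hW : IsClosed (W : Set E) := (completeSpace_coe_iff_isComplete.1 ‹_›).isClosed
  have : IsClosed (W.map ((e : E →L[𝕜] F) : E →ₗ[𝕜] F) : Set F) := by
    rw [map_coe]
    exact e.toHomeomorph.isClosed_image.2 hW
  exact this.completeSpace_coe

section
variable {𝕜 H : Type*} [RCLike 𝕜] [NormedAddCommGroup H] [InnerProductSpace 𝕜 H]

theorem Submodule.IsOrtho.starProjection_sup_apply {U Z : Submodule 𝕜 H}
    [U.HasOrthogonalProjection] [Z.HasOrthogonalProjection] [(U ⊔ Z).HasOrthogonalProjection]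
    (hUZ : U ⟂ Z) (f : H) :
    (U ⊔ Z).starProjection f = U.starProjection f + Z.starProjection f := by
  refine eq_starProjection_of_mem_orthogonal
    (add_mem (mem_sup_left (starProjection_apply_mem U f))
      (mem_sup_right (starProjection_apply_mem Z f))) ?_
  rw [← inf_orthogonal]
  constructor
  · rw [sub_add_eq_sub_sub]
    exact sub_mem (sub_starProjection_mem_orthogonal f) (hUZ.symm (starProjection_apply_mem Z f))
  · rw [sub_add_eq_sub_sub_swap]
    exact sub_mem (sub_starProjection_mem_orthogonal f) (hUZ (starProjection_apply_mem U f))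

theorem Submodule.IsOrtho.norm_sq_starProjection_sup_apply {U Z : Submodule 𝕜 H}
    [U.HasOrthogonalProjection] [Z.HasOrthogonalProjection] [(U ⊔ Z).HasOrthogonalProjection]
    (hUZ : U ⟂ Z) (f : H) :
    ‖(U ⊔ Z).starProjection f‖ ^ 2 = ‖U.starProjection f‖ ^ 2 + ‖Z.starProjection f‖ ^ 2 := by
  rw [hUZ.starProjection_sup_apply, sq, sq, sq]
  exact norm_add_sq_eq_norm_sq_add_norm_sq_of_inner_eq_zero _ _
    (hUZ.inner_eq (starProjection_apply_mem U f) (starProjection_apply_mem Z f))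

theorem norm_starProjection_span_unit_singleton {x : H} (hx : ‖x‖ = 1) (f : H) :
    ‖(𝕜 ∙ x).starProjection f‖ = ‖⟪x, f⟫_𝕜‖ := by
  rw [starProjection_unit_singleton 𝕜 hx, norm_smul, hx, mul_one]

theorem re_inner_starProjection_self (K : Submodule 𝕜 H) [K.HasOrthogonalProjection] (v : H) :
    RCLike.re ⟪K.starProjection v, v⟫_𝕜 = ‖K.starProjection v‖ ^ 2 :=
  K.re_inner_starProjection_eq_normSq v

theorem hasSum_norm_sq_starProjection {ι : Type*} {W : ι → Submodule 𝕜 H}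
    [∀ i, (W i).HasOrthogonalProjection] {g s : H}
    (hs : HasSum (fun i => (W i).starProjection g) s) :
    HasSum (fun i => ‖(W i).starProjection g‖ ^ 2) (RCLike.re ⟪g, s⟫_𝕜) :=
  (RCLike.hasSum_re 𝕜 ((innerSL 𝕜 g).hasSum hs)).congr_fun fun i => by
    rw [innerSL_apply_apply, ← inner_re_symm, re_inner_starProjection_self]

theorem norm_starProjection_map_le [CompleteSpace H] (E : H ≃L[𝕜] H) (W : Submodule 𝕜 H)
    [W.HasOrthogonalProjection] [(W.map ((E : H →L[𝕜] H) : H →ₗ[𝕜] H)).HasOrthogonalProjection]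
    (f : H) :
    ‖(W.map ((E : H →L[𝕜] H) : H →ₗ[𝕜] H)).starProjection f‖ ≤
      ‖(E.symm : H →L[𝕜] H)‖ * ‖W.starProjection (adjoint (E : H →L[𝕜] H) f)‖ := by
  obtain ⟨w, hw, hwp⟩ :=
    mem_map.1 (starProjection_apply_mem (W.map ((E : H →L[𝕜] H) : H →ₗ[𝕜] H)) f)
  set p := (W.map ((E : H →L[𝕜] H) : H →ₗ[𝕜] H)).starProjection f
  set q := W.starProjection (adjoint (E : H →L[𝕜] H) f)
  have hw_le : ‖w‖ ≤ ‖(E.symm : H →L[𝕜] H)‖ * ‖p‖ := by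
    calc ‖w‖ = ‖(E.symm : H →L[𝕜] H) p‖ := by rw [← hwp]; simp
      _ ≤ _ := le_opNorm _ _
  have hp_sq : ‖p‖ ^ 2 ≤ ‖w‖ * ‖q‖ :=
    calc ‖p‖ ^ 2 = RCLike.re ⟪p, f⟫_𝕜 := (re_inner_starProjection_self _ f).symm
      _ ≤ ‖⟪p, f⟫_𝕜‖ := RCLike.re_le_norm _
      _ = ‖⟪w, q⟫_𝕜‖ := by
          rw [← hwp, ← inner_starProjection_left_eq_right, starProjection_eq_self_iff.2 hw]
          exact congrArg _ (adjoint_inner_right _ _ _).symm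
      _ ≤ ‖w‖ * ‖q‖ := norm_inner_le_norm _ _
  rcases (norm_nonneg p).eq_or_lt with hp | hp
  · rw [← hp]
    positivity
  · refine le_of_mul_le_mul_left ?_ hp
    calc ‖p‖ * ‖p‖ = ‖p‖ ^ 2 := (sq _).symm
      _ ≤ ‖(E.symm : H →L[𝕜] H)‖ * ‖p‖ * ‖q‖ := hp_sq.trans (by gcongr)
      _ = ‖p‖ * (‖(E.symm : H →L[𝕜] H)‖ * ‖q‖) := by ring

variable {ι : Type*}

theorem tsum_norm_sq_starProjection_map_le [CompleteSpace H] {W : ι → Submodule 𝕜 H}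
    [∀ i, (W i).HasOrthogonalProjection] (S : H →L[𝕜] H)
    (hS : ∀ g, HasSum (fun i => (W i).starProjection g) (S g)) (E : H ≃L[𝕜] H)
    [∀ i, ((W i).map ((E : H →L[𝕜] H) : H →ₗ[𝕜] H)).HasOrthogonalProjection] (f : H) :
    ∑' i, ‖((W i).map ((E : H →L[𝕜] H) : H →ₗ[𝕜] H)).starProjection f‖ ^ 2 ≤
      ‖(E.symm : H →L[𝕜] H)‖ ^ 2 * ‖S‖ * ‖(E : H →L[𝕜] H)‖ ^ 2 * ‖f‖ ^ 2 := by
  set g := adjoint (E : H →L[𝕜] H) f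
  have hle : ∀ i, ‖((W i).map ((E : H →L[𝕜] H) : H →ₗ[𝕜] H)).starProjection f‖ ^ 2 ≤
      ‖(E.symm : H →L[𝕜] H)‖ ^ 2 * ‖(W i).starProjection g‖ ^ 2 := fun i => by
    rw [← mul_pow]
    gcongr
    exact norm_starProjection_map_le E (W i) f
  have hW := (hasSum_norm_sq_starProjection (hS g)).mul_left (‖(E.symm : H →L[𝕜] H)‖ ^ 2)
  have hg : ‖g‖ ≤ ‖(E : H →L[𝕜] H)‖ * ‖f‖ := by
    simpa only [g, LinearIsometryEquiv.norm_map] using le_opNorm (adjoint (E : H →L[𝕜] H)) f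
  calc ∑' i, ‖((W i).map ((E : H →L[𝕜] H) : H →ₗ[𝕜] H)).starProjection f‖ ^ 2
      ≤ ‖(E.symm : H →L[𝕜] H)‖ ^ 2 * RCLike.re ⟪g, S g⟫_𝕜 :=
        hasSum_le hle (hW.summable.of_nonneg_of_le (fun i => sq_nonneg _) hle).hasSum hW
    _ ≤ ‖(E.symm : H →L[𝕜] H)‖ ^ 2 * (‖S‖ * ‖g‖ ^ 2) := by
        gcongr
        calc RCLike.re ⟪g, S g⟫_𝕜 ≤ ‖g‖ * ‖S g‖ := re_inner_le_norm _ _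
          _ ≤ ‖g‖ * (‖S‖ * ‖g‖) := by gcongr; exact le_opNorm _ _
          _ = ‖S‖ * ‖g‖ ^ 2 := by ring
    _ ≤ ‖(E.symm : H →L[𝕜] H)‖ ^ 2 * (‖S‖ * (‖(E : H →L[𝕜] H)‖ * ‖f‖) ^ 2) := by gcongr
    _ = ‖(E.symm : H →L[𝕜] H)‖ ^ 2 * ‖S‖ * ‖(E : H →L[𝕜] H)‖ ^ 2 * ‖f‖ ^ 2 := by ring

theorem tsum_norm_sq_starProjection_sup_le {U Z : ι → Submodule 𝕜 H}
    [∀ i, (U i).HasOrthogonalProjection] [∀ i, (Z i).HasOrthogonalProjection]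
    [∀ i, (U i ⊔ Z i).HasOrthogonalProjection] (hUZ : ∀ i, U i ⟂ Z i) {f : H} {a b : ℝ}
    (ha : ∑' i, ‖(U i).starProjection f‖ ^ 2 ≤ a) (hb : ∑' i, ‖(Z i).starProjection f‖ ^ 2 ≤ b) :
    ∑' i, ‖(U i ⊔ Z i).starProjection f‖ ^ 2 ≤ a + b := by
  have hsplit := fun i => (hUZ i).norm_sq_starProjection_sup_apply f
  by_cases hs : Summable fun i => ‖(U i ⊔ Z i).starProjection f‖ ^ 2
  · have hU : Summable fun i => ‖(U i).starProjection f‖ ^ 2 :=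
      hs.of_nonneg_of_le (fun i => sq_nonneg _) fun i => by
        rw [hsplit]; exact le_add_of_nonneg_right (sq_nonneg _)
    have hZ : Summable fun i => ‖(Z i).starProjection f‖ ^ 2 :=
      hs.of_nonneg_of_le (fun i => sq_nonneg _) fun i => by
        rw [hsplit]; exact le_add_of_nonneg_left (sq_nonneg _)
    rw [tsum_congr hsplit, hU.tsum_add hZ]
    exact add_le_add ha hb
  · -- a non-summable `tsum` is `0`
    rw [tsum_eq_zero_of_not_summable hs]
    exact add_nonneg ((tsum_nonneg fun i => sq_nonneg _).trans ha)
      ((tsum_nonneg fun i => sq_nonneg _).trans hb)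

theorem hasSum_starProjection_symm_starProjection (S : H ≃L[𝕜] H) {W V : ι → Submodule 𝕜 H}
    [∀ i, (W i).HasOrthogonalProjection] [∀ i, (V i).HasOrthogonalProjection] {f : H}
    (hS : HasSum (fun i => (W i).starProjection f) (S f))
    (hWV : ∀ i, (W i).map ((S.symm : H →L[𝕜] H) : H →ₗ[𝕜] H) ≤ V i) :
    HasSum (fun i => (V i).starProjection (S.symm ((W i).starProjection f))) f := by
  have hfix : ∀ i, (V i).starProjection (S.symm ((W i).starProjection f)) =
      S.symm ((W i).starProjection f) := fun i =>
    starProjection_eq_self_iff.2 (hWV i (mem_map_of_mem (starProjection_apply_mem _ f)))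
  simpa only [hfix, ContinuousLinearEquiv.coe_coe, ContinuousLinearEquiv.symm_apply_apply]
    using (S.symm : H →L[𝕜] H).hasSum hS

end

theorem explicit_dual_construction_general
    {H : Type*} [NormedAddCommGroup H] [InnerProductSpace ℂ H] [CompleteSpace H]
    {ι : Type*} (W : ι → Submodule ℂ H) [∀ i, CompleteSpace (W i)]
    (SW : H ≃L[ℂ] H)
    (hSW : ∀ f : H, HasSum (fun i => fusionProj (W i) f) (SW f))
    (h : ι → H) (hnorm : ∀ i, ‖h i‖ = 1)
    (D : ℝ) (hBessel : ∀ f : H, ∑' i, ‖⟪h i, f⟫_ℂ‖ ^ 2 ≤ D * ‖f‖ ^ 2)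
    (hperp : ∀ i, h i ∈ ((W i).map (((SW.symm : H →L[ℂ] H) : H →ₗ[ℂ] H)))ᗮ)
    (V : ι → Submodule ℂ H)
    (hV : ∀ i, V i = (W i).map (((SW.symm : H →L[ℂ] H) : H →ₗ[ℂ] H)) ⊔ (ℂ ∙ h i))
    [∀ i, CompleteSpace (V i)] :
    (∃ B' : ℝ, ∀ f : H, ∑' i, ‖fusionProj (V i) f‖ ^ 2 ≤ B' * ‖f‖ ^ 2) ∧
    ∀ f : H, HasSum (fun i => fusionProj (V i) (SW.symm (fusionProj (W i) f))) f := by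
  obtain rfl : V = fun i => (W i).map ((SW.symm : H →L[ℂ] H) : H →ₗ[ℂ] H) ⊔ (ℂ ∙ h i) :=
    funext hV
  simp only [fusionProj_eq_starProjection] at hSW ⊢
  refine ⟨⟨‖(SW : H →L[ℂ] H)‖ ^ 2 * ‖(SW : H →L[ℂ] H)‖ * ‖(SW.symm : H →L[ℂ] H)‖ ^ 2 + D,
    fun f => ?_⟩, fun f => hasSum_starProjection_symm_starProjection SW (hSW f) fun i => le_sup_left⟩
  rw [add_mul]
  refine tsum_norm_sq_starProjection_sup_le
    (fun i => IsOrtho.symm ((span_singleton_le_iff_mem _ _).2 (hperp i)))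
    (tsum_norm_sq_starProjection_map_le _ hSW SW.symm f) ?_
  simpa only [norm_starProjection_span_unit_singleton (hnorm _)] using hBessel f

/-- Let `{(W i, 1)}` be a fusion frame with frame operator `S_W` and `{h i}` a Bessel
sequence of unit vectors with `h i ∈ (S_W⁻¹ W i)ᗮ`. Set `V i = S_W⁻¹ W i + span{h i}`.
Then `{(V i, 1)}` is a Bessel fusion sequence and a dual of `{(W i, 1)}`:
`f = ∑ π_{V i} S_W⁻¹ π_{W i} f` for all `f ∈ H`. -/
theorem explicit_dual_construction
    {H : Type*} [NormedAddCommGroup H] [InnerProductSpace ℂ H] [CompleteSpace H]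
    {ι : Type*} (W : ι → Submodule ℂ H) [∀ i, CompleteSpace (W i)]
    (A B : ℝ) (hA : 0 < A) (hAB : A ≤ B)
    (hframe : ∀ f : H,
      A * ‖f‖ ^ 2 ≤ ∑' i, ‖fusionProj (W i) f‖ ^ 2 ∧
        ∑' i, ‖fusionProj (W i) f‖ ^ 2 ≤ B * ‖f‖ ^ 2)
    (SW : H ≃L[ℂ] H)
    (hSW : ∀ f : H, HasSum (fun i => fusionProj (W i) f) (SW f))
    (h : ι → H) (hnorm : ∀ i, ‖h i‖ = 1)
    (D : ℝ) (hBessel : ∀ f : H, ∑' i, ‖⟪h i, f⟫_ℂ‖ ^ 2 ≤ D * ‖f‖ ^ 2)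
    (hperp : ∀ i, h i ∈ ((W i).map (((SW.symm : H →L[ℂ] H) : H →ₗ[ℂ] H)))ᗮ)
    (V : ι → Submodule ℂ H)
    (hV : ∀ i, V i = (W i).map (((SW.symm : H →L[ℂ] H) : H →ₗ[ℂ] H)) ⊔ (ℂ ∙ h i))
    [∀ i, CompleteSpace (V i)] :
    (∃ B' : ℝ, ∀ f : H, ∑' i, ‖fusionProj (V i) f‖ ^ 2 ≤ B' * ‖f‖ ^ 2) ∧
    ∀ f : H, HasSum (fun i => fusionProj (V i) (SW.symm (fusionProj (W i) f))) f :=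
  explicit_dual_construction_general W SW hSW h hnorm D hBessel hperp V hV
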